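/- The trigonometric Dunkl operators satisfy the degenerate affine Hecke algebra relations with the simple transpositions: as endomorphisms of 𝔽[x₁,…,xₙ], for 1 ≤ i ≤ n−1 one has sᵢ ∘ Uᵢ = U_{i+1} ∘ sᵢ − id and sᵢ ∘ U_{i+1} = Uᵢ ∘ sᵢ + id, and sᵢ ∘ Uⱼ = Uⱼ ∘ sᵢ whenever j ≠ i, i+1. -/

import Mathlib

open MvPolynomial

noncomputable section

variable (F : Type) [Field F] [CharZero F] {n : ℕ}

/-- The action of a permutation `w` on polynomials, permuting the variables. -/
def permOp (w : Equiv.Perm (Fin n)) : Module.End F (MvPolynomial (Fin n) F) :=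
  (MvPolynomial.rename (⇑w)).toLinearMap

/-- The operator exchanging the variables `xᵢ` and `xⱼ`. -/
def swapOp (i j : Fin n) : Module.End F (MvPolynomial (Fin n) F) :=
  permOp F (Equiv.swap i j)

theorem delta_existsUnique (i j : Fin n) (hij : i ≠ j) (f : MvPolynomial (Fin n) F) :
    ∃! g : MvPolynomial (Fin n) F,
      (X i - X j) * g = f - MvPolynomial.rename (⇑(Equiv.swap i j)) f := by
  have hne : (X i - X j : MvPolynomial (Fin n) F) ≠ 0 :=
    sub_ne_zero_of_ne (fun h => hij (MvPolynomial.X_injective h))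
  have hex : ∃ g : MvPolynomial (Fin n) F,
      (X i - X j) * g = f - MvPolynomial.rename (⇑(Equiv.swap i j)) f := by
    induction f using MvPolynomial.induction_on with
    | C a => exact ⟨0, by simp⟩
    | add p q hp hq =>
      obtain ⟨g1, h1⟩ := hp
      obtain ⟨g2, h2⟩ := hq
      exact ⟨g1 + g2, by rw [map_add]; linear_combination h1 + h2⟩
    | mul_X p k hp =>
      obtain ⟨g, hg⟩ := hp
      have hren : MvPolynomial.rename (⇑(Equiv.swap i j)) (p * X k) =
          MvPolynomial.rename (⇑(Equiv.swap i j)) p * X (Equiv.swap i j k) := by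
        simp
      rcases eq_or_ne k i with rfl | hki
      · refine ⟨p + g * X j, ?_⟩
        rw [hren, Equiv.swap_apply_left]
        linear_combination X j * hg
      rcases eq_or_ne k j with rfl | hkj
      · refine ⟨-p + g * X i, ?_⟩
        rw [hren, Equiv.swap_apply_right]
        linear_combination X i * hg
      · refine ⟨g * X k, ?_⟩
        rw [hren, Equiv.swap_apply_of_ne_of_ne hki hkj]
        linear_combination X k * hg
  obtain ⟨g, hg⟩ := hex
  exact ⟨g, hg, fun y hy => mul_left_cancel₀ hne (hy.trans hg.symm)⟩

/-- The divided-difference operator `Δ_{ij} = (xᵢ - xⱼ)⁻¹ (1 - s_{ij})`. -/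
def Delta (i j : Fin n) : Module.End F (MvPolynomial (Fin n) F) where
  toFun f :=
    if h : i ≠ j then (delta_existsUnique F i j h f).exists.choose else 0
  map_add' f g := by
    by_cases h : i ≠ j
    · simp only [dif_pos h]
      apply (delta_existsUnique F i j h (f + g)).unique
      · exact (delta_existsUnique F i j h (f + g)).exists.choose_spec
      · rw [mul_add, (delta_existsUnique F i j h f).exists.choose_spec,
          (delta_existsUnique F i j h g).exists.choose_spec, map_add]
        ring
    · simp [dif_neg h]
  map_smul' c f := by
    by_cases h : i ≠ j
    · simp only [dif_pos h, RingHom.id_apply]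
      apply (delta_existsUnique F i j h (c • f)).unique
      · exact (delta_existsUnique F i j h (c • f)).exists.choose_spec
      · rw [Algebra.mul_smul_comm, (delta_existsUnique F i j h f).exists.choose_spec,
          map_smul, smul_sub]
    · simp [dif_neg h]

/-- The Dunkl operator `Yᵢ = κ ∂ᵢ + Σ_{j ≠ i} Δ_{ij}`. -/
def Dunkl (κ : F) (i : Fin n) : Module.End F (MvPolynomial (Fin n) F) :=
  κ • (MvPolynomial.pderiv i).toLinearMap + ∑ j ∈ Finset.univ.erase i, Delta F i j

/-- The trigonometric Dunkl (Cherednik) operator `Uᵢ = xᵢ Yᵢ + Σ_{j < i} s_{ji}`. -/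
def Cher (κ : F) (i : Fin n) : Module.End F (MvPolynomial (Fin n) F) :=
  LinearMap.mulLeft F (X i) * Dunkl F κ i +
    ∑ j ∈ Finset.univ.filter (fun j => j < i), swapOp F j i


section Aux

variable {F}

set_option linter.unusedSectionVars false

lemma Delta_spec (i j : Fin n) (hij : i ≠ j) (f : MvPolynomial (Fin n) F) :
    (X i - X j) * Delta F i j f = f - MvPolynomial.rename (⇑(Equiv.swap i j)) f := by
  show (X i - X j) * (if h : i ≠ j then (delta_existsUnique F i j h f).exists.choose else 0) = _
  rw [dif_pos hij]
  exact (delta_existsUnique F i j hij f).exists.choose_spec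

lemma permOp_apply (w : Equiv.Perm (Fin n)) (f : MvPolynomial (Fin n) F) :
    permOp F w f = MvPolynomial.rename (⇑w) f := rfl

lemma permOp_mul (u v : Equiv.Perm (Fin n)) :
    permOp F u * permOp F v = permOp F (u * v) := by
  apply LinearMap.ext; intro f
  simp only [Module.End.mul_apply, permOp_apply, MvPolynomial.rename_rename]
  rfl

lemma permOp_one : permOp F (1 : Equiv.Perm (Fin n)) = 1 := by
  apply LinearMap.ext; intro f
  simp [permOp_apply, MvPolynomial.rename_id, Equiv.Perm.coe_one]

lemma swapOp_mul_self (a b : Fin n) : swapOp F a b * swapOp F a b = 1 := by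
  unfold swapOp
  rw [permOp_mul, Equiv.swap_mul_self, permOp_one]

lemma swapOp_comm (a b : Fin n) : swapOp F a b = swapOp F b a := by
  unfold swapOp; rw [Equiv.swap_comm]

lemma permOp_Delta (w : Equiv.Perm (Fin n)) (i j : Fin n) (hij : i ≠ j) :
    permOp F w * Delta F i j = Delta F (w i) (w j) * permOp F w := by
  apply LinearMap.ext; intro f
  have hw : w i ≠ w j := fun hh => hij (w.injective hh)
  have hne : (X (w i) - X (w j) : MvPolynomial (Fin n) F) ≠ 0 :=
    sub_ne_zero_of_ne (fun hh => hw (MvPolynomial.X_injective hh))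
  simp only [Module.End.mul_apply, permOp_apply]
  apply mul_left_cancel₀ hne
  rw [Delta_spec (w i) (w j) hw]
  have key : MvPolynomial.rename ⇑w (MvPolynomial.rename (⇑(Equiv.swap i j)) f) =
      MvPolynomial.rename (⇑(Equiv.swap (w i) (w j))) (MvPolynomial.rename ⇑w f) := by
    rw [MvPolynomial.rename_rename, MvPolynomial.rename_rename,
      ← Equiv.Perm.coe_mul, ← Equiv.Perm.coe_mul, Equiv.mul_swap_eq_swap_mul]
  calc (X (w i) - X (w j)) * MvPolynomial.rename ⇑w (Delta F i j f)
      = MvPolynomial.rename ⇑w ((X i - X j) * Delta F i j f) := by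
        rw [map_mul, map_sub, MvPolynomial.rename_X, MvPolynomial.rename_X]
    _ = MvPolynomial.rename ⇑w f -
        MvPolynomial.rename (⇑(Equiv.swap (w i) (w j))) (MvPolynomial.rename ⇑w f) := by
        rw [Delta_spec i j hij, map_sub, key]

lemma permOp_Dunkl (w : Equiv.Perm (Fin n)) (κ : F) (i : Fin n) :
    permOp F w * Dunkl F κ i = Dunkl F κ (w i) * permOp F w := by
  have h1 : permOp F w * (κ • (MvPolynomial.pderiv i).toLinearMap) =
      (κ • (MvPolynomial.pderiv (w i)).toLinearMap) * permOp F w := by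
    apply LinearMap.ext; intro f
    simp only [Module.End.mul_apply, LinearMap.smul_apply, LinearMap.coe_mk,
      permOp_apply]
    rw [show ((MvPolynomial.pderiv (w i)).toLinearMap) ((MvPolynomial.rename ⇑w) f)
        = (MvPolynomial.pderiv (w i)) ((MvPolynomial.rename ⇑w) f) from rfl,
      MvPolynomial.pderiv_rename w.injective, map_smul]
    rfl
  have h2 : permOp F w * (∑ j ∈ Finset.univ.erase i, Delta F i j) =
      (∑ j ∈ Finset.univ.erase (w i), Delta F (w i) j) * permOp F w := by
    rw [Finset.mul_sum, Finset.sum_mul]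
    apply Finset.sum_equiv w
    · intro j
      simp [Finset.mem_erase, w.injective.ne_iff]
    · intro j hj
      exact permOp_Delta w i j (fun hh => (Finset.mem_erase.mp hj).1 hh.symm)
  unfold Dunkl
  rw [mul_add, add_mul, h1, h2]

lemma permOp_mulLeftX (w : Equiv.Perm (Fin n)) (i : Fin n) :
    permOp F w * LinearMap.mulLeft F (X i : MvPolynomial (Fin n) F) =
      LinearMap.mulLeft F (X (w i)) * permOp F w := by
  apply LinearMap.ext; intro f
  simp [permOp_apply, LinearMap.mulLeft_apply]

lemma permOp_swapOp (w : Equiv.Perm (Fin n)) (a b : Fin n) :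
    permOp F w * swapOp F a b = swapOp F (w a) (w b) * permOp F w := by
  unfold swapOp
  rw [permOp_mul, permOp_mul, Equiv.mul_swap_eq_swap_mul]

lemma permOp_Cher (w : Equiv.Perm (Fin n)) (κ : F) (i : Fin n) :
    permOp F w * Cher F κ i =
      (LinearMap.mulLeft F (X (w i)) * Dunkl F κ (w i) +
        ∑ j ∈ Finset.univ.filter (fun j => j < i), swapOp F (w j) (w i)) * permOp F w := by
  unfold Cher
  rw [mul_add, add_mul, Finset.mul_sum, Finset.sum_mul]
  congr 1
  · rw [← mul_assoc, permOp_mulLeftX, mul_assoc, permOp_Dunkl, ← mul_assoc]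
  · exact Finset.sum_congr rfl fun j _ => permOp_swapOp w j i

lemma swap_Cher (a b : Fin n) (κ : F) (i : Fin n) :
    swapOp F a b * Cher F κ i =
      (LinearMap.mulLeft F (X (Equiv.swap a b i)) * Dunkl F κ (Equiv.swap a b i) +
        ∑ j ∈ Finset.univ.filter (fun j => j < i),
          swapOp F (Equiv.swap a b j) (Equiv.swap a b i)) * swapOp F a b :=
  permOp_Cher (Equiv.swap a b) κ i

end Aux

theorem stmt11 (n : ℕ) (hn : 2 ≤ n) (κ : F) (i : Fin n) (h : (i : ℕ) + 1 < n) :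
    (swapOp F i ⟨(i : ℕ) + 1, h⟩ * Cher F κ i =
      Cher F κ ⟨(i : ℕ) + 1, h⟩ * swapOp F i ⟨(i : ℕ) + 1, h⟩ - 1) ∧
    (swapOp F i ⟨(i : ℕ) + 1, h⟩ * Cher F κ ⟨(i : ℕ) + 1, h⟩ =
      Cher F κ i * swapOp F i ⟨(i : ℕ) + 1, h⟩ + 1) ∧
    (∀ j : Fin n, j ≠ i → j ≠ ⟨(i : ℕ) + 1, h⟩ →
      swapOp F i ⟨(i : ℕ) + 1, h⟩ * Cher F κ j =
        Cher F κ j * swapOp F i ⟨(i : ℕ) + 1, h⟩) := by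
  
  set ip1 : Fin n := ⟨(i : ℕ) + 1, h⟩ with hip1
  have hswl : Equiv.swap i ip1 i = ip1 := Equiv.swap_apply_left i ip1
  have hswr : Equiv.swap i ip1 ip1 = i := Equiv.swap_apply_right i ip1
  have hfix : ∀ j : Fin n, j < i → Equiv.swap i ip1 j = j := by
    intro j hj
    refine Equiv.swap_apply_of_ne_of_ne (ne_of_lt hj) fun hh => ?_
    have h1 : (j : ℕ) < (i : ℕ) := hj
    have h2 : (j : ℕ) = (i : ℕ) + 1 := congrArg Fin.val hh
    omega
  have hfilter : Finset.univ.filter (fun j => j < ip1) =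
      insert i (Finset.univ.filter (fun j => j < i)) := by
    ext j
    simp only [Finset.mem_filter, Finset.mem_univ, true_and, Finset.mem_insert,
      Fin.lt_def, Fin.ext_iff, hip1]
    omega
  have hnotmem : i ∉ Finset.univ.filter (fun j => j < i) := by simp
  refine ⟨?_, ?_, ?_⟩
  · rw [swap_Cher, hswl]
    have sumeq : ∑ j ∈ Finset.univ.filter (fun j => j < i),
        swapOp F (Equiv.swap i ip1 j) ip1
        = ∑ j ∈ Finset.univ.filter (fun j => j < i), swapOp F j ip1 :=
      Finset.sum_congr rfl fun j hj => by
        rw [hfix j (Finset.mem_filter.mp hj).2]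
    rw [sumeq]
    have hC : Cher F κ ip1 = (LinearMap.mulLeft F (X ip1) * Dunkl F κ ip1 +
        ∑ j ∈ Finset.univ.filter (fun j => j < i), swapOp F j ip1) + swapOp F i ip1 := by
      unfold Cher
      rw [hfilter, Finset.sum_insert hnotmem]
      abel
    rw [hC, add_mul (LinearMap.mulLeft F (X ip1) * Dunkl F κ ip1 +
        ∑ j ∈ Finset.univ.filter (fun j => j < i), swapOp F j ip1) (swapOp F i ip1)
        (swapOp F i ip1),
      swapOp_mul_self, add_sub_cancel_right]
  · rw [swap_Cher, hswr, hfilter, Finset.sum_insert hnotmem, hswl]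
    have sumeq : ∑ j ∈ Finset.univ.filter (fun j => j < i),
        swapOp F (Equiv.swap i ip1 j) i
        = ∑ j ∈ Finset.univ.filter (fun j => j < i), swapOp F j i :=
      Finset.sum_congr rfl fun j hj => by
        rw [hfix j (Finset.mem_filter.mp hj).2]
    rw [sumeq, swapOp_comm ip1 i]
    have hC : Cher F κ i = LinearMap.mulLeft F (X i) * Dunkl F κ i +
        ∑ j ∈ Finset.univ.filter (fun j => j < i), swapOp F j i := rfl
    rw [hC, show LinearMap.mulLeft F (X i) * Dunkl F κ i + (swapOp F i ip1 +
        ∑ j ∈ Finset.univ.filter (fun j => j < i), swapOp F j i) =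
        (LinearMap.mulLeft F (X i) * Dunkl F κ i +
          ∑ j ∈ Finset.univ.filter (fun j => j < i), swapOp F j i) + swapOp F i ip1
      from by abel,
      add_mul (LinearMap.mulLeft F (X i) * Dunkl F κ i +
        ∑ j ∈ Finset.univ.filter (fun j => j < i), swapOp F j i) (swapOp F i ip1)
        (swapOp F i ip1),
      swapOp_mul_self]
  · intro j hji hjip
    rw [swap_Cher, Equiv.swap_apply_of_ne_of_ne hji hjip]
    have h1 : (j : ℕ) ≠ (i : ℕ) := fun hh => hji (Fin.ext hh)
    have h2 : (j : ℕ) ≠ (i : ℕ) + 1 := fun hh => hjip (Fin.ext hh)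
    have sumeq : ∑ k ∈ Finset.univ.filter (fun k => k < j),
        swapOp F (Equiv.swap i ip1 k) j
        = ∑ k ∈ Finset.univ.filter (fun k => k < j), swapOp F k j := by
      apply Finset.sum_equiv (Equiv.swap i ip1)
      · intro k
        simp only [Finset.mem_filter, Finset.mem_univ, true_and, Fin.lt_def]
        rcases eq_or_ne k i with rfl | hki
        · rw [hswl, hip1]
          simp only [Fin.val_mk]
          omega
        rcases eq_or_ne k ip1 with rfl | hkip
        · rw [hswr, hip1]
          simp only [Fin.val_mk]
          omega
        · rw [Equiv.swap_apply_of_ne_of_ne hki hkip]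
      · intro k _
        rfl
    rw [sumeq]
    rfl
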